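/- For x ≥ 0 define the Poissonized trie sizes T(x) = ∑_{w∈𝒜^*} [1 − (1 + x P(w)) e^{−x P(w)}] and, for a ∈ 𝒜, T_a(x) = ∑_{w∈𝒜^*} [1 − (1 + x P_a(w)) e^{−x P_a(w)}]. These series converge for all x ≥ 0 and satisfy the functional equations T(x) = 1 − (1+x)e^{−x} + ∑_{a∈𝒜} T_a(π_a x) and, for every b ∈ 𝒜, T_b(x) = 1 − (1+x)e^{−x} + ∑_{a∈𝒜} T_a(P(a|b)·x). -/

import Mathlib

/-- `chainProb P b w` is the probability `P_b(w)` of emitting the word `w` when the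
Markov source with transition probabilities `P a b = P(a|b)` is started from state `b`. -/
def chainProb {A : Type*} (P : A → A → ℝ) : A → List A → ℝ
  | _, [] => 1
  | b, a :: w => P a b * chainProb P a w

/-- `wordProb π P w` is the stationary probability `P(w)` of the word `w`. -/
def wordProb {A : Type*} (π : A → ℝ) (P : A → A → ℝ) : List A → ℝ
  | [] => 1
  | a :: w => π a * chainProb P a w

/-- The summand `1 - (1 + x p) e^{-x p}` of the Poissonized trie size. -/
noncomputable def poissonSummand (x p : ℝ) : ℝ :=
  1 - (1 + x * p) * Real.exp (-(x * p))

/-!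
Splitting off the first letter, a word `a :: w` has weight `μ a * P_a(w)`, with `μ = π` for `P`
and `μ = P(·|b)` for `P_b`, and `poissonSummand x (μ * p) = poissonSummand (μ * x) p`; summing over
the first letter gives both functional equations. For convergence, the summand is at most
`(x p)²`, and the words of length `n` have total weight `1` and individual weight at most `m ^ n`,
where `m < 1` bounds all transition probabilities (each `P(·|b)` has at least two positive
entries summing to `1`).
-/

lemma poissonSummand_nonneg (x p : ℝ) : 0 ≤ poissonSummand x p := by
  have h : (1 + x * p) * Real.exp (-(x * p)) ≤ 1 := by
    calc (1 + x * p) * Real.exp (-(x * p)) ≤ Real.exp (x * p) * Real.exp (-(x * p)) := by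
          gcongr; linarith [Real.add_one_le_exp (x * p)]
      _ = 1 := by rw [← Real.exp_add, add_neg_cancel, Real.exp_zero]
  unfold poissonSummand
  linarith

/-- From `e^{-t} ≥ 1 - t`, so `(1 + t) e^{-t} ≥ 1 - t²`. -/
lemma poissonSummand_le_sq {x p : ℝ} (hxp : 0 ≤ x * p) : poissonSummand x p ≤ (x * p) ^ 2 := by
  have h : 1 - x * p ≤ Real.exp (-(x * p)) := by linarith [Real.add_one_le_exp (-(x * p))]
  have : (1 + x * p) * (1 - x * p) ≤ (1 + x * p) * Real.exp (-(x * p)) := by gcongr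
  unfold poissonSummand
  nlinarith

lemma poissonSummand_mul_right (x c p : ℝ) :
    poissonSummand x (c * p) = poissonSummand (c * x) p := by
  rw [poissonSummand, poissonSummand, mul_left_comm, mul_assoc]

lemma poissonSummand_one (x : ℝ) : poissonSummand x 1 = 1 - (1 + x) * Real.exp (-x) := by
  rw [poissonSummand, mul_one]

theorem List.hasSum_of_hasSum_cons {A M : Type*} [Fintype A] [AddCommMonoid M]
    [TopologicalSpace M] [ContinuousAdd M] {f : List A → M} {s : A → M}
    (h : ∀ a, HasSum (fun w => f (a :: w)) (s a)) :
    HasSum f (f [] + ∑ a, s a) := by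
  classical
  have hcons : ∀ a, HasSum (Function.extend (a :: ·) (fun w => f (a :: w)) 0) (s a) :=
    fun a => (hasSum_extend_zero List.cons_injective).2 (h a)
  convert (hasSum_ite_eq [] (f [])).add (hasSum_sum fun a _ => hcons a) using 1
  funext w
  cases w with
  | nil => simp
  | cons b v =>
    rw [Finset.sum_eq_single b, List.cons_injective.extend_apply]
    · simp
    · intro a _ hab
      refine Function.extend_apply' _ _ _ ?_
      rintro ⟨u, hu⟩
      exact hab (List.cons_eq_cons.mp hu).1
    · simp

section Chain

variable {A : Type*} {P : A → A → ℝ}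

lemma chainProb_nonneg (hP : ∀ a b, 0 ≤ P a b) (b : A) (w : List A) : 0 ≤ chainProb P b w := by
  induction w generalizing b with
  | nil => exact zero_le_one
  | cons a w ih => exact mul_nonneg (hP a b) (ih a)

lemma chainProb_le_pow_length (hP : ∀ a b, 0 ≤ P a b) {m : ℝ} (hPm : ∀ a b, P a b ≤ m)
    (b : A) (w : List A) : chainProb P b w ≤ m ^ w.length := by
  induction w generalizing b with
  | nil => simp [chainProb]
  | cons a w ih =>
    rw [chainProb, List.length_cons, pow_succ']
    exact mul_le_mul (hPm a b) (ih a) (chainProb_nonneg hP a w) ((hP a b).trans (hPm a b))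

variable [Fintype A]

lemma sum_chainProb_ofFn (hProw : ∀ b, ∑ a, P a b = 1) (n : ℕ) (b : A) :
    ∑ c : Fin n → A, chainProb P b (List.ofFn c) = 1 := by
  induction n generalizing b with
  | zero => simp [chainProb]
  | succ n ih =>
    rw [← (Fin.consEquiv fun _ => A).sum_comp, Fintype.sum_prod_type]
    simp [List.ofFn_succ, chainProb, ← Finset.mul_sum, ih, hProw]

lemma exists_lt_one_forall_le (hcard : 2 ≤ Fintype.card A) (hPpos : ∀ a b, 0 < P a b)
    (hProw : ∀ b, ∑ a, P a b = 1) : ∃ m < 1, ∀ a b, P a b ≤ m := by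
  have : Nonempty A := Fintype.card_pos_iff.mp (by omega)
  obtain ⟨⟨a₀, b₀⟩, hmax⟩ := Finite.exists_max fun p : A × A => P p.1 p.2
  obtain ⟨a₁, ha₁⟩ := Fintype.exists_ne_of_one_lt_card (by omega) a₀
  refine ⟨P a₀ b₀, ?_, fun a b => hmax (a, b)⟩
  calc P a₀ b₀ < ∑ a, P a b₀ :=
        Finset.single_lt_sum ha₁ (Finset.mem_univ _) (Finset.mem_univ _) (hPpos a₁ b₀)
          fun a _ _ => (hPpos a b₀).le
    _ = 1 := hProw b₀

lemma summable_chainProb_sq (hP : ∀ a b, 0 ≤ P a b) (hProw : ∀ b, ∑ a, P a b = 1) {m : ℝ}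
    (hm : m < 1) (hPm : ∀ a b, P a b ≤ m) (b : A) :
    Summable fun w => chainProb P b w ^ 2 := by
  rw [← List.equivSigmaTuple.symm.summable_iff]
  change Summable fun p : Σ n, Fin n → A => chainProb P b (List.ofFn p.2) ^ 2
  rw [summable_sigma_of_nonneg fun _ => sq_nonneg _]
  refine ⟨fun _ => Summable.of_finite, ?_⟩
  refine .of_nonneg_of_le (fun _ => tsum_nonneg fun _ => sq_nonneg _) (fun n => ?_)
    (summable_geometric_of_lt_one ((hP b b).trans (hPm b b)) hm)
  calc ∑' c : Fin n → A, chainProb P b (List.ofFn c) ^ 2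
      ≤ ∑ c : Fin n → A, m ^ n * chainProb P b (List.ofFn c) := by
        rw [tsum_fintype]
        refine Finset.sum_le_sum fun c _ => ?_
        rw [sq]
        gcongr
        · exact chainProb_nonneg hP b _
        · simpa using chainProb_le_pow_length hP hPm b (List.ofFn c)
    _ = m ^ n := by rw [← Finset.mul_sum, sum_chainProb_ofFn hProw, mul_one]

lemma summable_poissonSummand_chainProb (hP : ∀ a b, 0 ≤ P a b) (hProw : ∀ b, ∑ a, P a b = 1)
    {m : ℝ} (hm : m < 1) (hPm : ∀ a b, P a b ≤ m) (b : A) {x : ℝ} (hx : 0 ≤ x) :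
    Summable fun w => poissonSummand x (chainProb P b w) := by
  have hxp w : 0 ≤ x * chainProb P b w := mul_nonneg hx (chainProb_nonneg hP b w)
  refine .of_nonneg_of_le (fun w => poissonSummand_nonneg _ _)
    (fun w => (poissonSummand_le_sq (hxp w)).trans_eq (mul_pow _ _ _))
    ((summable_chainProb_sq hP hProw hm hPm b).mul_left _)

lemma hasSum_poissonSummand_of_cons (hP : ∀ a b, 0 ≤ P a b) (hProw : ∀ b, ∑ a, P a b = 1)
    {m : ℝ} (hm : m < 1) (hPm : ∀ a b, P a b ≤ m) {μ : A → ℝ} (hμ : ∀ a, 0 ≤ μ a)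
    {g : List A → ℝ} (hg_nil : g [] = 1) (hg_cons : ∀ a w, g (a :: w) = μ a * chainProb P a w)
    {x : ℝ} (hx : 0 ≤ x) :
    HasSum (fun w => poissonSummand x (g w))
      (1 - (1 + x) * Real.exp (-x) + ∑ a, ∑' w, poissonSummand (μ a * x) (chainProb P a w)) := by
  rw [← poissonSummand_one, ← hg_nil]
  refine List.hasSum_of_hasSum_cons fun a => ?_
  simp only [hg_cons, poissonSummand_mul_right]
  exact (summable_poissonSummand_chainProb hP hProw hm hPm a (mul_nonneg (hμ a) hx)).hasSum

end Chain

theorem poissonized_trie_functional_equation_general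
    {A : Type*} [Fintype A]
    (hcard : 2 ≤ Fintype.card A)
    (P : A → A → ℝ) (π : A → ℝ)
    (hPpos : ∀ a b, 0 < P a b)
    (hProw : ∀ b, ∑ a, P a b = 1)
    (hπpos : ∀ a, 0 < π a)
    (T : ℝ → ℝ)
    (hT : ∀ x, T x = ∑' w : List A, poissonSummand x (wordProb π P w))
    (Ta : A → ℝ → ℝ)
    (hTa : ∀ a x, Ta a x = ∑' w : List A, poissonSummand x (chainProb P a w)) :
    (∀ x : ℝ, 0 ≤ x →
      Summable (fun w : List A => poissonSummand x (wordProb π P w)) ∧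
      ∀ a : A, Summable (fun w : List A => poissonSummand x (chainProb P a w))) ∧
    (∀ x : ℝ, 0 ≤ x →
      T x = 1 - (1 + x) * Real.exp (-x) + ∑ a : A, Ta a (π a * x)) ∧
    (∀ x : ℝ, 0 ≤ x → ∀ b : A,
      Ta b x = 1 - (1 + x) * Real.exp (-x) + ∑ a : A, Ta a (P a b * x)) := by
  obtain ⟨m, hm, hPm⟩ := exists_lt_one_forall_le hcard hPpos hProw
  have hP a b : 0 ≤ P a b := (hPpos a b).le
  have hword {x : ℝ} (hx : 0 ≤ x) :=
    hasSum_poissonSummand_of_cons hP hProw hm hPm (fun a => (hπpos a).le)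
      (g := wordProb π P) rfl (fun _ _ => rfl) hx
  have hchain (b : A) {x : ℝ} (hx : 0 ≤ x) :=
    hasSum_poissonSummand_of_cons hP hProw hm hPm (fun a => hP a b)
      (g := chainProb P b) rfl (fun _ _ => rfl) hx
  refine ⟨fun x hx => ⟨(hword hx).summable, fun a => (hchain a hx).summable⟩,
    fun x hx => ?_, fun x hx b => ?_⟩
  · simp only [hT, hTa, (hword hx).tsum_eq]
  · simp only [hTa, (hchain b hx).tsum_eq]

/-- The Poissonized trie sizes `T(x) = ∑_{w∈𝒜*} [1 - (1 + xP(w))e^{-xP(w)}]` and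
`T_a(x) = ∑_{w∈𝒜*} [1 - (1 + xP_a(w))e^{-xP_a(w)}]` converge for all `x ≥ 0` and
satisfy `T(x) = 1 - (1+x)e^{-x} + ∑_a T_a(π_a x)` and
`T_b(x) = 1 - (1+x)e^{-x} + ∑_a T_a(P(a|b) x)`. -/
theorem poissonized_trie_functional_equation
    {A : Type*} [Fintype A]
    (hcard : 2 ≤ Fintype.card A)
    (P : A → A → ℝ) (π : A → ℝ)
    (hPpos : ∀ a b, 0 < P a b)
    (hProw : ∀ b, ∑ a, P a b = 1)
    (hπpos : ∀ a, 0 < π a)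
    (hπsum : ∑ a, π a = 1)
    (hπstat : ∀ a, ∑ b, π b * P a b = π a)
    (T : ℝ → ℝ)
    (hT : ∀ x, T x = ∑' w : List A, poissonSummand x (wordProb π P w))
    (Ta : A → ℝ → ℝ)
    (hTa : ∀ a x, Ta a x = ∑' w : List A, poissonSummand x (chainProb P a w)) :
    (∀ x : ℝ, 0 ≤ x →
      Summable (fun w : List A => poissonSummand x (wordProb π P w)) ∧
      ∀ a : A, Summable (fun w : List A => poissonSummand x (chainProb P a w))) ∧
    (∀ x : ℝ, 0 ≤ x →
      T x = 1 - (1 + x) * Real.exp (-x) + ∑ a : A, Ta a (π a * x)) ∧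
    (∀ x : ℝ, 0 ≤ x → ∀ b : A,
      Ta b x = 1 - (1 + x) * Real.exp (-x) + ∑ a : A, Ta a (P a b * x)) :=
  poissonized_trie_functional_equation_general hcard P π hPpos hProw hπpos T hT Ta hTa
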